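/- Characterization of strong subformulas, part 1: if A = A₁ ∧ ... ∧ Aₙ with n > 0 where each Aᵢ is prime (not a conjunction), and B is a strong subformula of A, then B is a proper subformula of one of A₁, ..., Aₙ. -/
import Mathlib


/-- Formulas built from atoms, ⊥, ∧ and →. -/
inductive Form where
  | atom : ℕ → Form
  | bot  : Form
  | conj : Form → Form → Form
  | imp  : Form → Form → Form
deriving DecidableEq

/-- The subformula relation. -/
inductive Subform : Form → Form → Prop
  | refl (A) : Subform A A
  | conjL : Subform B A₁ → Subform B (Form.conj A₁ A₂)
  | conjR : Subform B A₂ → Subform B (Form.conj A₁ A₂)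
  | impL : Subform B A₁ → Subform B (Form.imp A₁ A₂)
  | impR : Subform B A₂ → Subform B (Form.imp A₁ A₂)

/-- Proper subformula: a subformula distinct from the whole formula. -/
def ProperSub (B A : Form) : Prop := Subform B A ∧ B ≠ A

/-- A formula is prime if it is not a conjunction. -/
def PrimeForm (A : Form) : Prop := ∀ X Y, A ≠ Form.conj X Y

/-- The prime factors of a formula: split top-level conjunctions recursively. -/
def primeFactors : Form → List Form
  | Form.conj A B => primeFactors A ++ primeFactors B
  | A => [A]

/-- B is a strong subformula of A if B is a proper subformula of some prime
proper subformula of A. -/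
def StrongSub (B A : Form) : Prop :=
  ∃ C, PrimeForm C ∧ ProperSub C A ∧ ProperSub B C

/-- Right-nested conjunction of a nonempty list of formulas. -/
def conjList : Form → List Form → Form
  | A, [] => A
  | A, B :: l => Form.conj A (conjList B l)

def Form.size : Form → ℕ
  | Form.atom _ => 1
  | Form.bot => 1
  | Form.conj A B => A.size + B.size + 1
  | Form.imp A B => A.size + B.size + 1

lemma subform_size {B A : Form} (h : Subform B A) : B = A ∨ B.size < A.size := by
  induction h with
  | refl => left; rfl
  | conjL h ih | conjR h ih | impL h ih | impR h ih =>
    right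
    rcases ih with rfl | hl
    · simp [Form.size]
    · simp [Form.size]; omega

lemma subform_trans {A B C : Form} (h1 : Subform A B) (h2 : Subform B C) :
    Subform A C := by
  induction h2 with
  | refl => exact h1
  | conjL _ ih => exact Subform.conjL ih
  | conjR _ ih => exact Subform.conjR ih
  | impL _ ih => exact Subform.impL ih
  | impR _ ih => exact Subform.impR ih

lemma prime_propersub_conjList (C A : Form) (l : List Form)
    (hC : PrimeForm C) (h : ProperSub C (conjList A l)) :
    ∃ E ∈ A :: l, Subform C E := by
  induction l generalizing A with
  | nil => exact ⟨A, by simp, h.1⟩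
  | cons D l' ih =>
    obtain ⟨hsub, hne⟩ := h
    cases hsub with
    | refl => exact absurd rfl (hC _ _)
    | conjL h' => exact ⟨A, by simp, h'⟩
    | conjR h' =>
      by_cases heq : C = conjList D l'
      · cases l' with
        | nil => exact ⟨D, by simp, heq ▸ Subform.refl _⟩
        | cons x xs => exact absurd heq (hC _ _)
      · obtain ⟨E, hE, hCE⟩ := ih D ⟨h', heq⟩
        exact ⟨E, by simpa using Or.inr hE, hCE⟩

/-- Characterization of strong subformulas, part 1: a strong subformula of a
conjunction of prime formulas is a proper subformula of one of the conjuncts. -/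
theorem strongSub_of_conj (A : Form) (l : List Form) (B : Form)
    (hprime : ∀ C ∈ A :: l, PrimeForm C)
    (h : StrongSub B (conjList A l)) :
    ∃ C ∈ A :: l, ProperSub B C := by
  obtain ⟨C, hCp, hCA, hBs, hBne⟩ := h
  obtain ⟨E, hE, hCE⟩ := prime_propersub_conjList C A l hCp hCA
  refine ⟨E, hE, subform_trans hBs hCE, ?_⟩
  rintro rfl
  rcases subform_size hBs with rfl | h1
  · exact hBne rfl
  · rcases subform_size hCE with rfl | h2
    · exact hBne rfl
    · omega
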